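/- arXiv:2508.00681 — 5 statements merged into one kernel-verified Lean document; each statement's English description precedes it below -/
import Mathlib

section
/- A finite group G satisfies i(G) = c(G), where i(G) is the number of elements x with x^2 = 1 and c(G) is the number of cyclic subgroups of G, if and only if G is an elementary abelian 2-group (i.e., every element satisfies x^2 = 1). -/
/-!
If `y ^ 2 = 1` then `zpowers y = {1, y}`, so `x ↦ zpowers x` is an injection from the solutions of
`x ^ 2 = 1` into the cyclic subgroups. For finite `G` the two counts agree exactly when this
injection is onto, i.e. when every cyclic subgroup `zpowers x` is generated by some `y` with
`y ^ 2 = 1`; since every element of such a `zpowers y` squares to `1`, this happens exactly when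
`x ^ 2 = 1` for all `x`.
-/

noncomputable def numInv (G : Type*) [Group G] : ℕ := Nat.card {x : G // x ^ 2 = 1}

noncomputable def numCyc (G : Type*) [Group G] : ℕ := Nat.card {H : Subgroup G // IsCyclic H}

namespace Subgroup

variable {G : Type*} [Group G]

theorem sq_eq_one_of_mem_zpowers {x y : G} (hy : y ^ 2 = 1) (hx : x ∈ zpowers y) : x ^ 2 = 1 := by
  obtain ⟨n, rfl⟩ := hx
  rw [← zpow_natCast, ← zpow_mul, mul_comm, zpow_mul, zpow_natCast, hy, one_zpow]

theorem coe_zpowers_of_sq_eq_one {y : G} (hy : y ^ 2 = 1) : (zpowers y : Set G) = {1, y} := by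
  ext x
  refine ⟨?_, ?_⟩
  · rintro ⟨n, rfl⟩
    obtain ⟨k, rfl | rfl⟩ := Int.even_or_odd' n
    · left
      change y ^ (2 * k) = 1
      rw [zpow_mul, zpow_ofNat, hy, one_zpow]
    · right
      change y ^ (2 * k + 1) = y
      rw [zpow_add_one, zpow_mul, zpow_ofNat, hy, one_zpow, one_mul]
  · rintro (rfl | rfl)
    exacts [one_mem _, mem_zpowers _]

theorem eq_of_zpowers_eq_of_sq_eq_one {x y : G} (hx : x ^ 2 = 1) (hy : y ^ 2 = 1)
    (h : zpowers x = zpowers y) : x = y := by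
  have hpair : ({1, x} : Set G) = {1, y} := by
    rw [← coe_zpowers_of_sq_eq_one hx, ← coe_zpowers_of_sq_eq_one hy, h]
  obtain ⟨-, rfl⟩ | ⟨rfl, rfl⟩ := Set.pair_eq_pair_iff.1 hpair <;> rfl

variable (G) in
def zpowersOfSqEqOne (x : {x : G // x ^ 2 = 1}) : {H : Subgroup G // IsCyclic H} :=
  ⟨zpowers x, inferInstance⟩

theorem zpowersOfSqEqOne_injective : Function.Injective (zpowersOfSqEqOne G) :=
  fun x y h => Subtype.ext <| eq_of_zpowers_eq_of_sq_eq_one x.2 y.2 (congrArg Subtype.val h)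

theorem zpowersOfSqEqOne_surjective_iff :
    Function.Surjective (zpowersOfSqEqOne G) ↔ ∀ x : G, x ^ 2 = 1 := by
  refine ⟨fun h x => ?_, fun h ⟨H, hH⟩ => ?_⟩
  · obtain ⟨y, hy⟩ := h ⟨zpowers x, inferInstance⟩
    have hyx : zpowers (y : G) = zpowers x := congrArg Subtype.val hy
    exact sq_eq_one_of_mem_zpowers y.2 (hyx ▸ mem_zpowers x)
  · obtain ⟨g, rfl⟩ := H.isCyclic_iff_exists_zpowers_eq_top.1 hH
    exact ⟨⟨g, h g⟩, rfl⟩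

end Subgroup

open Subgroup

theorem stmt_0 (G : Type*) [Group G] [Finite G] :
    numInv G = numCyc G ↔ ∀ x : G, x ^ 2 = 1 := by
  rw [← zpowersOfSqEqOne_surjective_iff]
  refine ⟨fun h => ?_, fun h => ?_⟩
  · exact ((Nat.bijective_iff_injective_and_card _).2 ⟨zpowersOfSqEqOne_injective, h⟩).2
  · exact Nat.card_eq_of_bijective _ ⟨zpowersOfSqEqOne_injective, h⟩
end

section
/- If G is a finite group in which more than 3/4 of the elements satisfy x^2 = 1, then G is an elementary abelian 2-group. -/
open Pointwise

theorem Set.ncard_add_ncard_le_card_add_ncard_inter {α : Type*} [Finite α] (s t : Set α) :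
    s.ncard + t.ncard ≤ Nat.card α + (s ∩ t).ncard := by
  have := Set.ncard_inter_add_ncard_union s t
  have := (s ∪ t).ncard_le_card
  omega

theorem Subgroup.eq_top_of_card_lt_two_mul {G : Type*} [Group G] [Finite G] (H : Subgroup G)
    (h : Nat.card G < 2 * Nat.card H) : H = ⊤ := by
  by_contra hH
  have := H.one_lt_index_of_ne_top hH
  have := H.index_mul_card
  nlinarith

section

variable {G : Type*} [Group G]

theorem commute_of_sq_eq_one {a x : G} (ha : a ^ 2 = 1) (hx : x ^ 2 = 1)
    (hax : (a * x) ^ 2 = 1) : Commute a x := by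
  rw [sq, ← eq_inv_iff_mul_eq_one] at ha hx hax
  calc a * x = (a * x)⁻¹ := hax
    _ = x * a := by rw [mul_inv_rev, ← hx, ← ha]

theorem sq_eq_one_of_mul_mem_center {g x : G} (hx : x ∈ Subgroup.center G) (hx2 : x ^ 2 = 1)
    (hgx : (g * x) ^ 2 = 1) : g ^ 2 = 1 := by
  have hcomm : Commute (g * x) x⁻¹ := Subgroup.mem_center_iff.mp (inv_mem hx) (g * x)
  calc g ^ 2 = (g * x * x⁻¹) ^ 2 := by group
    _ = 1 := by rw [hcomm.mul_pow, hgx, inv_pow, hx2, one_mul, inv_one]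

theorem numInv_eq_ncard : numInv G = {x : G | x ^ 2 = 1}.ncard :=
  Nat.card_coe_set_eq _

theorem two_mul_numInv_le_card_add_ncard_inter_smul [Finite G] (g : G) :
    2 * numInv G ≤ Nat.card G + ({x : G | x ^ 2 = 1} ∩ g⁻¹ • {x : G | x ^ 2 = 1}).ncard := by
  have := Set.ncard_add_ncard_le_card_add_ncard_inter {x : G | x ^ 2 = 1}
    (g⁻¹ • {x : G | x ^ 2 = 1})
  rw [Set.ncard_smul_set, ← numInv_eq_ncard] at this
  omega

theorem mem_center_of_sq_eq_one [Finite G] (h : 3 * Nat.card G < 4 * numInv G) {a : G}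
    (ha : a ^ 2 = 1) : a ∈ Subgroup.center G := by
  have hcount := two_mul_numInv_le_card_add_ncard_inter_smul a
  set S := {x : G | x ^ 2 = 1}
  have hsub : S ∩ a⁻¹ • S ⊆ Subgroup.centralizer {a} := by
    rintro x ⟨hx, hax⟩
    rw [Set.mem_inv_smul_set_iff] at hax
    simpa [Subgroup.mem_centralizer_singleton_iff] using (commute_of_sq_eq_one ha hx hax).symm.eq
  have hbig : Nat.card G < 2 * Nat.card (Subgroup.centralizer {a}) := by
    have := Set.ncard_le_ncard hsub
    rw [← SetLike.coe_sort_coe, Nat.card_coe_set_eq]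
    omega
  exact Set.singleton_subset_iff.mp <| Subgroup.centralizer_eq_top_iff_subset.mp <|
    (Subgroup.centralizer {a}).eq_top_of_card_lt_two_mul hbig

end

theorem stmt_2 (G : Type*) [Group G] [Finite G]
    (h : 4 * numInv G > 3 * Nat.card G) : ∀ x : G, x ^ 2 = 1 := by
  intro g
  have hcount := two_mul_numInv_le_card_add_ncard_inter_smul g
  obtain ⟨x, hx, hgx⟩ : ({x : G | x ^ 2 = 1} ∩ g⁻¹ • {x : G | x ^ 2 = 1}).Nonempty :=
    Set.nonempty_of_ncard_ne_zero (by omega)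
  rw [Set.mem_inv_smul_set_iff] at hgx
  exact sq_eq_one_of_mul_mem_center (mem_center_of_sq_eq_one h hx) hx hgx
end

section
/- If a finite group H satisfies i(H) = c(H) - r, then the group H × Z/2 satisfies i(H × Z/2) = c(H × Z/2) - 2r. -/
/-!
Involutions of `H × C₂` are the pairs `(x, ε)` with `x ^ 2 = 1`, so `i` doubles. A cyclic subgroup
`⟨(g, ε)⟩` of `H × C₂` is determined by its projection `⟨g⟩` together with whether `ε = 1`: if
`⟨a⟩ = ⟨b⟩` then `b = a ^ k` for some odd `k`, and `ε ^ k = ε`. Every pair of a cyclic subgroup of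
`H` and a bit arises, so `c` doubles too, and `i - c` doubles.
-/

open Subgroup

local notation "C₂" => Multiplicative (ZMod 2)

section

variable {G K : Type*} [Group G] [Group K]

theorem exists_odd_zpow_eq_of_zpowers_eq {a b : G} (h : zpowers a = zpowers b) :
    ∃ k : ℤ, Odd k ∧ a ^ k = b := by
  obtain ⟨m, hm⟩ : b ∈ zpowers a := h ▸ mem_zpowers b
  obtain ⟨l, hl⟩ : a ∈ zpowers b := h ▸ mem_zpowers a
  dsimp only at hm hl
  rcases Int.even_or_odd m with hm_even | hm_odd
  · -- `a ^ (m * l - 1) = 1` with `m * l - 1` odd, so `a` has odd order and `m + orderOf a` is odd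
    have hdvd : (orderOf a : ℤ) ∣ m * l - 1 := by
      rw [orderOf_dvd_iff_zpow_eq_one, zpow_sub_one, zpow_mul, hm, hl, mul_inv_cancel]
    have hodd : Odd (orderOf a : ℤ) := by
      have : Odd (m * l - 1) := (hm_even.mul_right l).sub_odd odd_one
      exact Int.natAbs_odd.mp
        ((Int.natAbs_odd.mpr this).of_dvd_nat (Int.natAbs_dvd_natAbs.mpr hdvd))
    refine ⟨m + orderOf a, hm_even.add_odd hodd, ?_⟩
    rw [zpow_add, hm, zpow_natCast, pow_orderOf_eq_one, mul_one]
  · exact ⟨m, hm_odd, hm⟩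

theorem zpow_eq_self_of_sq_eq_one {x : G} (hx : x ^ 2 = 1) {k : ℤ} (hk : Odd k) : x ^ k = x := by
  obtain ⟨j, rfl⟩ := hk
  rw [zpow_add_one, zpow_mul, zpow_two, ← sq, hx, one_zpow, one_mul]

theorem zpowers_prod_le_of_zpowers_eq {a b : G} {ε : K} (hε : ε ^ 2 = 1)
    (h : zpowers a = zpowers b) : zpowers (b, ε) ≤ zpowers (a, ε) := by
  obtain ⟨k, hk, hab⟩ := exists_odd_zpow_eq_of_zpowers_eq h
  exact zpowers_le.mpr ⟨k, Prod.ext hab (zpow_eq_self_of_sq_eq_one hε hk)⟩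

theorem zpowers_prod_eq_of_zpowers_eq {a b : G} {ε : K} (hε : ε ^ 2 = 1)
    (h : zpowers a = zpowers b) : zpowers (a, ε) = zpowers (b, ε) :=
  (zpowers_prod_le_of_zpowers_eq hε h.symm).antisymm (zpowers_prod_le_of_zpowers_eq hε h)

theorem map_fst_zpowers (g : G × K) : (zpowers g).map (MonoidHom.fst G K) = zpowers g.1 :=
  MonoidHom.map_zpowers _ _

theorem zpowers_le_ker_snd_iff (g : G × K) :
    zpowers g ≤ (MonoidHom.snd G K).ker ↔ g.2 = 1 := by
  rw [zpowers_le, MonoidHom.mem_ker, MonoidHom.coe_snd]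

theorem numInv_prod : numInv (G × K) = numInv G * numInv K := by
  rw [numInv, numInv, numInv, ← Nat.card_prod]
  refine Nat.card_congr ((Equiv.subtypeEquivRight fun x => ?_).trans Equiv.subtypeProdEquivProd)
  exact Prod.ext_iff

end

theorem numInv_multiplicative_zmod_two : numInv C₂ = 2 := by
  rw [numInv, Nat.card_eq_fintype_card]
  decide

theorem zmod_two_sq_eq_one (ε : C₂) : ε ^ 2 = 1 := by
  revert ε
  decide

theorem zmod_two_eq_of_eq_one_iff {ε ε' : C₂} (h : ε = 1 ↔ ε' = 1) : ε = ε' := by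
  revert ε ε'
  decide

theorem zmod_two_exists_eq_one_iff (p : Prop) : ∃ ε : C₂, (ε = 1 ↔ p) := by
  by_cases hp : p
  · exact ⟨1, by simp [hp]⟩
  · exact ⟨Multiplicative.ofAdd 1, by simp [hp]⟩

section

variable (G : Type*) [Group G]

def splitCyclicSubgroupProdZModTwo :
    {K : Subgroup (G × C₂) // IsCyclic K} → {C : Subgroup G // IsCyclic C} × Prop :=
  fun K =>
    (⟨K.1.map (MonoidHom.fst G C₂),
        haveI := K.2; isCyclic_of_surjective _ ((MonoidHom.fst G C₂).subgroupMap_surjective K.1)⟩,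
      K.1 ≤ (MonoidHom.snd G C₂).ker)

theorem splitCyclicSubgroupProdZModTwo_bijective :
    Function.Bijective (splitCyclicSubgroupProdZModTwo G) := by
  constructor
  · rintro ⟨K₁, hK₁⟩ ⟨K₂, hK₂⟩ heq
    obtain ⟨g₁, rfl⟩ := K₁.isCyclic_iff_exists_zpowers_eq_top.mp hK₁
    obtain ⟨g₂, rfl⟩ := K₂.isCyclic_iff_exists_zpowers_eq_top.mp hK₂
    simp only [splitCyclicSubgroupProdZModTwo, Prod.mk.injEq, Subtype.mk.injEq, map_fst_zpowers,
      zpowers_le_ker_snd_iff] at heq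
    obtain ⟨hfst, hsnd⟩ := heq
    have hε : g₁.2 = g₂.2 := zmod_two_eq_of_eq_one_iff (Iff.of_eq hsnd)
    refine Subtype.ext ?_
    calc zpowers g₁ = zpowers (g₁.1, g₂.2) := by rw [← hε]
      _ = zpowers g₂ := zpowers_prod_eq_of_zpowers_eq (zmod_two_sq_eq_one _) hfst
  · rintro ⟨⟨C, hC⟩, p⟩
    obtain ⟨g, rfl⟩ := C.isCyclic_iff_exists_zpowers_eq_top.mp hC
    obtain ⟨ε, hε⟩ := zmod_two_exists_eq_one_iff p
    refine ⟨⟨zpowers (g, ε), inferInstance⟩, Prod.ext (Subtype.ext (map_fst_zpowers _)) ?_⟩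
    exact propext ((zpowers_le_ker_snd_iff _).trans hε)

theorem numCyc_prod_multiplicative_zmod_two : numCyc (G × C₂) = 2 * numCyc G := by
  rw [numCyc, numCyc,
    Nat.card_congr (Equiv.ofBijective _ (splitCyclicSubgroupProdZModTwo_bijective G)),
    Nat.card_prod, Nat.card_eq_fintype_card (α := Prop), Fintype.card_prop, mul_comm]

end

theorem stmt_11_general (H : Type*) [Group H] (r : ℕ)
    (h : numInv H + r = numCyc H) :
    numInv (H × Multiplicative (ZMod 2)) + 2 * r =
      numCyc (H × Multiplicative (ZMod 2)) := by
  rw [numInv_prod, numInv_multiplicative_zmod_two, numCyc_prod_multiplicative_zmod_two]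
  omega

theorem stmt_11 (H : Type*) [Group H] [Finite H] (r : ℕ)
    (h : numInv H + r = numCyc H) :
    numInv (H × Multiplicative (ZMod 2)) + 2 * r =
      numCyc (H × Multiplicative (ZMod 2)) :=
  stmt_11_general H r h
end

section
/- For pairwise distinct odd primes p_1, ..., p_n, the direct product of the dihedral groups D_{2p_1}, ..., D_{2p_n} satisfies β(∏ D_{2p_j}) = ∏ β(D_{2p_j}) = ∏ (p_j + 1)/(p_j + 2). -/
noncomputable def beta (G : Type*) [Group G] : ℚ := (numInv G : ℚ) / (numCyc G : ℚ)

/-!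
Counting every cyclic subgroup `H` through its `φ |H|` generators gives
`c(G) = ∑_{g ∈ G} 1 / φ(ord g)`. In a product `∏ G_j` the order of `g` is the lcm of the orders
of its coordinates. When `ord g_j ∣ 2 q_j` with the `q_j` pairwise coprime, any two of these
orders share at most a factor `2`, and since `φ 2 = 1` this gives `φ(ord g) = ∏ φ(ord g_j)`, so
`c` is multiplicative. `i` is multiplicative for any product. For an odd prime `p`, `D_{2p}` has
`p + 1` elements with `x² = 1`, and its cyclic subgroups are `1`, the rotation subgroup and the
`p` reflection subgroups.
-/

open Function Subgroup Finset

namespace Nat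

theorem totient_lcm_of_gcd_dvd_two {a b : ℕ} (h : a.gcd b ∣ 2) :
    φ (a.lcm b) = φ a * φ b := by
  rcases (Nat.dvd_prime Nat.prime_two).mp h with h1 | h2
  · rw [Coprime.lcm_eq_mul h1, totient_mul h1]
  · have hev : Even (a.lcm b) :=
      even_iff_two_dvd.mpr (h2 ▸ (gcd_dvd_left a b).trans (dvd_lcm_left a b))
    have key := totient_gcd_mul_totient_mul a b
    rw [h2, totient_two, one_mul, ← gcd_mul_lcm a b, h2, totient_two_mul_of_even hev] at key
    omega

theorem totient_finset_lcm_of_dvd_two_mul {ι : Type*} (s : Finset ι) (q a : ι → ℕ)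
    (hq : (s : Set ι).Pairwise (Coprime on q)) (ha : ∀ i ∈ s, a i ∣ 2 * q i) :
    φ (s.lcm a) = ∏ i ∈ s, φ (a i) := by
  classical
  induction s using Finset.induction_on with
  | empty => simp
  | @insert j s hj ih =>
    have hlcm : s.lcm a ∣ 2 * ∏ i ∈ s, q i :=
      Finset.lcm_dvd fun i hi => (ha i (by simp [hi])).trans
        (Nat.mul_dvd_mul_left 2 (Finset.dvd_prod_of_mem q hi))
    have hcop : Coprime (q j) (∏ i ∈ s, q i) :=
      Coprime.prod_right fun i hi => hq (by simp) (by simp [hi]) (by rintro rfl; exact hj hi)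
    have hgcd : (a j).gcd (s.lcm a) ∣ 2 := by
      have := Nat.dvd_gcd ((gcd_dvd_left _ _).trans (ha j (by simp)))
        ((gcd_dvd_right _ _).trans hlcm)
      rwa [Nat.gcd_mul_left, hcop.gcd_eq_one, mul_one] at this
    rw [Finset.lcm_insert, Finset.prod_insert hj, lcm_eq_nat_lcm, totient_lcm_of_gcd_dvd_two hgcd,
      ih (hq.mono (by simp)) fun i hi => ha i (by simp [hi])]

end Nat

section CyclicSubgroups

variable {G : Type*} [Group G]

theorem zpowers_eq_iff_mem_and_orderOf_eq [Finite G] {H : Subgroup G} {g : G} :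
    zpowers g = H ↔ g ∈ H ∧ orderOf g = Nat.card H := by
  refine ⟨?_, fun ⟨hg, hord⟩ =>
    eq_of_le_of_card_ge (zpowers_le.mpr hg) (by rw [Nat.card_zpowers, hord])⟩
  rintro rfl
  exact ⟨mem_zpowers g, (Nat.card_zpowers g).symm⟩

theorem card_zpowers_eq [Finite G] (H : Subgroup G) [IsCyclic H] :
    Nat.card {g : G // zpowers g = H} = Nat.totient (Nat.card H) := by
  have : Fintype H := Fintype.ofFinite H
  classical
  calc Nat.card {g : G // zpowers g = H}
      = Nat.card {g : G // g ∈ H ∧ orderOf g = Nat.card H} := by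
        simp_rw [zpowers_eq_iff_mem_and_orderOf_eq]
    _ = Nat.card {h : H // orderOf h = Nat.card H} :=
        Nat.card_congr ((Equiv.subtypeSubtypeEquivSubtypeInter (· ∈ H) _).symm.trans
          (Equiv.subtypeEquivRight fun h => by rw [orderOf_coe]))
    _ = Nat.totient (Nat.card H) := by
        rw [Nat.card_eq_fintype_card, Fintype.card_subtype, Nat.card_eq_fintype_card,
          IsCyclic.card_orderOf_eq_totient dvd_rfl]

theorem numCyc_eq_sum_inv_totient [Fintype G] :
    (numCyc G : ℚ) = ∑ g : G, ((orderOf g).totient : ℚ)⁻¹ := by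
  classical
  have : Fintype (Subgroup G) := Fintype.ofFinite _
  have hfiber (H : Subgroup G) (hH : IsCyclic H) :
      ∑ g with zpowers g = H, ((orderOf g).totient : ℚ)⁻¹ = 1 := by
    have hpos : (Nat.card H).totient ≠ 0 := (Nat.totient_pos.mpr Nat.card_pos).ne'
    rw [sum_congr rfl fun g hg => by rw [← Nat.card_zpowers, (mem_filter.mp hg).2], sum_const,
      ← Fintype.card_subtype, ← Nat.card_eq_fintype_card, card_zpowers_eq, nsmul_eq_mul,
      mul_inv_cancel₀ (by exact_mod_cast hpos)]
  rw [← sum_fiberwise_of_maps_to (t := {H : Subgroup G | IsCyclic H}) (g := zpowers)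
    (by simp [isCyclic_zpowers])]
  rw [sum_congr rfl fun H hH => hfiber H (by simpa using hH)]
  simp [numCyc, Nat.card_eq_fintype_card, Fintype.card_subtype]

end CyclicSubgroups

section Products

variable {ι : Type*} [Fintype ι] (G : ι → Type*) [∀ i, Group (G i)]

theorem numInv_pi : numInv (∀ i, G i) = ∏ i, numInv (G i) := by
  simp only [numInv, ← Nat.card_pi]
  exact Nat.card_congr ((Equiv.subtypeEquivRight fun x => by simp [funext_iff]).trans
    Equiv.subtypePiEquivPi)

variable [DecidableEq ι] [∀ i, Fintype (G i)]

theorem numCyc_pi_of_orderOf_dvd_two_mul (q : ι → ℕ) (hq : Pairwise (Nat.Coprime on q))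
    (hG : ∀ i (g : G i), orderOf g ∣ 2 * q i) : numCyc (∀ i, G i) = ∏ i, numCyc (G i) := by
  have htot (x : ∀ i, G i) :
      ((orderOf x).totient : ℚ)⁻¹ = ∏ i, ((orderOf (x i)).totient : ℚ)⁻¹ := by
    rw [Pi.orderOf, Nat.totient_finset_lcm_of_dvd_two_mul _ q _ (fun i _ j _ hij => hq hij)
      fun i _ => hG i (x i)]
    push_cast
    exact (prod_inv_distrib fun i => ((orderOf (x i)).totient : ℚ)).symm
  rw [← Nat.cast_inj (R := ℚ), Nat.cast_prod, numCyc_eq_sum_inv_totient]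
  simp_rw [htot, numCyc_eq_sum_inv_totient]
  exact (Fintype.prod_sum fun i (g : G i) => ((orderOf g).totient : ℚ)⁻¹).symm

theorem beta_pi_of_orderOf_dvd_two_mul (q : ι → ℕ) (hq : Pairwise (Nat.Coprime on q))
    (hG : ∀ i (g : G i), orderOf g ∣ 2 * q i) : beta (∀ i, G i) = ∏ i, beta (G i) := by
  simp only [beta, numInv_pi, numCyc_pi_of_orderOf_dvd_two_mul G q hq hG, Nat.cast_prod,
    prod_div_distrib]

end Products

namespace DihedralGroup

variable {n : ℕ}

theorem sum_eq_sum_r_add_sum_sr {M : Type*} [AddCommMonoid M] [NeZero n]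
    (f : DihedralGroup n → M) : ∑ g, f g = ∑ i, f (r i) + ∑ i, f (sr i) := by
  rw [← equivSum.symm.sum_comp, Fintype.sum_sum_type]
  rfl

theorem orderOf_dvd_two_mul (g : DihedralGroup n) : orderOf g ∣ 2 * n :=
  nat_card (n := n) ▸ orderOf_dvd_natCard g

theorem orderOf_r_of_prime {p : ℕ} [Fact p.Prime] {i : ZMod p} (hi : i ≠ 0) :
    orderOf (r i) = p := by
  rw [orderOf_r, Nat.coprime_of_lt_prime ((ZMod.val_ne_zero i).mpr hi) (ZMod.val_lt i) Fact.out,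
    Nat.div_one]

theorem numInv_eq_of_odd (hn : Odd n) : numInv (DihedralGroup n) = n + 1 := by
  have : NeZero n := ⟨hn.pos.ne'⟩
  classical
  have hr (i : ZMod n) : r i ^ 2 = 1 ↔ i = 0 := by
    rw [r_pow, one_def, r.injEq, Nat.cast_two, mul_two, ZMod.add_self_eq_zero_iff_eq_zero hn]
  have hsr (i : ZMod n) : sr i ^ 2 = 1 := by rw [sq, sr_mul_self]
  simp only [numInv, Nat.card_eq_fintype_card, Fintype.card_subtype, card_filter,
    sum_eq_sum_r_add_sum_sr, hr, hsr]
  simp [add_comm]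

theorem numCyc_eq_of_prime {p : ℕ} (hp : p.Prime) : numCyc (DihedralGroup p) = p + 2 := by
  have : Fact p.Prime := ⟨hp⟩
  have hp1 : ((p - 1 : ℕ) : ℚ) ≠ 0 := by have := hp.two_le; norm_cast; omega
  suffices (numCyc (DihedralGroup p) : ℚ) = p + 2 by exact_mod_cast this
  classical
  rw [numCyc_eq_sum_inv_totient, sum_eq_sum_r_add_sum_sr, Fintype.sum_eq_add_sum_compl 0,
    sum_congr rfl fun i hi => by rw [orderOf_r_of_prime (by simpa using hi), Nat.totient_prime hp]]
  simp only [r_zero, orderOf_one, orderOf_sr, Nat.totient_one, Nat.totient_two, sum_const,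
    card_compl, card_singleton, card_univ, ZMod.card, nsmul_eq_mul, mul_inv_cancel₀ hp1]
  push_cast
  ring

theorem beta_eq_of_prime_of_odd {p : ℕ} (hp : p.Prime) (hodd : Odd p) :
    beta (DihedralGroup p) = ((p : ℚ) + 1) / ((p : ℚ) + 2) := by
  rw [beta, numInv_eq_of_odd hodd, numCyc_eq_of_prime hp]
  push_cast
  rfl

end DihedralGroup

theorem stmt_15 (n : ℕ) (p : Fin n → ℕ) (hp : ∀ j, (p j).Prime) (hodd : ∀ j, Odd (p j))
    (hinj : Function.Injective p) :
    beta (∀ j, DihedralGroup (p j)) = ∏ j, beta (DihedralGroup (p j)) ∧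
    beta (∀ j, DihedralGroup (p j)) = ∏ j, ((p j : ℚ) + 1) / ((p j : ℚ) + 2) := by
  have : ∀ j, NeZero (p j) := fun j => ⟨(hp j).ne_zero⟩
  have hcop : Pairwise (Nat.Coprime on p) := fun i j hij =>
    (Nat.coprime_primes (hp i) (hp j)).mpr (hinj.ne hij)
  have hpi := beta_pi_of_orderOf_dvd_two_mul _ p hcop fun j => DihedralGroup.orderOf_dvd_two_mul
  exact ⟨hpi, hpi.trans (prod_congr rfl fun j _ =>
    DihedralGroup.beta_eq_of_prime_of_odd (hp j) (hodd j))⟩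
end

section
/- The set of values {∏_{j ∈ I} (p_j + 1)/(p_j + 2) : I a finite set of odd primes} is dense in the interval [0, 1]. -/
/-!
Write `(p + 1)/(p + 2) = 1 - 1/(p + 2)`. Along the primes `p_k < p_{k+1} < ⋯` beyond a threshold,
the partial products `∏ (1 - 1/(p_i + 2))` start at `1`, decrease in steps of at most
`1/(p_k + 2)`, and tend to `0` because `∑ 1/p` diverges. So for every `x ∈ [0, 1]` some partial
product lands within one step of `x`, and the step size can be made arbitrarily small.
-/

open Nat Finset Filter Topology

lemma not_summable_one_div_nth_prime :
    ¬ Summable (fun n : ℕ => (1 : ℝ) / nth Nat.Prime n) := by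
  have hbij :
      Function.Bijective (fun n : ℕ => (⟨nth Nat.Prime n, prime_nth_prime n⟩ : Primes)) :=
    ⟨fun _ _ h => nth_injective infinite_setOfPred_prime (congrArg Subtype.val h),
      fun p => ⟨count Nat.Prime p, Subtype.ext (nth_count p.2)⟩⟩
  exact fun h => Primes.not_summable_one_div ((Equiv.ofBijective _ hbij).summable_iff.mp h)

lemma not_summable_one_div_nth_prime_add_two (k : ℕ) :
    ¬ Summable (fun n : ℕ => (1 : ℝ) / (nth Nat.Prime (n + k) + 2)) := by
  intro h
  apply not_summable_one_div_nth_prime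
  rw [← summable_nat_add_iff k]
  refine (h.mul_left 3).of_nonneg_of_le (fun _ => by positivity) fun n => ?_
  have hp : (1 : ℝ) ≤ nth Nat.Prime (n + k) := by exact_mod_cast (prime_nth_prime _).one_le
  rw [mul_one_div, div_le_div_iff₀ (by positivity) (by positivity)]
  linarith

lemma exists_odd_primes_ge_not_summable (k : ℕ) :
    ∃ p : ℕ → ℕ, p.Injective ∧ (∀ i, (p i).Prime ∧ Odd (p i)) ∧ (∀ i, k ≤ p i) ∧
      ¬ Summable (fun i => (1 : ℝ) / (p i + 2)) := by
  have hge (i : ℕ) : k + 3 ≤ nth Nat.Prime (i + (k + 1)) :=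
    le_trans (by omega) (add_two_le_nth_prime _)
  refine ⟨fun i => nth Nat.Prime (i + (k + 1)),
    fun a b hab => by simpa using nth_injective infinite_setOfPred_prime hab,
    fun i => ⟨prime_nth_prime _, (prime_nth_prime _).odd_of_ne_two ?_⟩,
    fun i => le_trans (by omega) (hge i), not_summable_one_div_nth_prime_add_two _⟩
  have := hge i
  omega

lemma exists_mem_Ico_of_sub_le_succ {a : ℕ → ℝ} {x δ : ℝ} (h0 : x ≤ a 0)
    (hstep : ∀ n, a n - δ ≤ a (n + 1)) (hlow : ∃ n, a n < x + δ) :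
    ∃ n, a n ∈ Set.Ico x (x + δ) := by
  classical
  refine ⟨Nat.find hlow, ?_, Nat.find_spec hlow⟩
  rcases hm : Nat.find hlow with _ | m
  · exact h0
  · have hprev : x + δ ≤ a m := not_lt.mp (Nat.find_min hlow (by omega))
    linarith [hstep m]

lemma tendsto_prod_range_one_sub_of_not_summable {h : ℕ → ℝ} (h0 : ∀ i, 0 ≤ h i)
    (h1 : ∀ i, h i ≤ 1) (hh : ¬ Summable h) :
    Tendsto (fun n => ∏ i ∈ range n, (1 - h i)) atTop (𝓝 0) := by
  have hsum : Tendsto (fun n => ∑ i ∈ range n, h i) atTop atTop :=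
    (not_summable_iff_tendsto_nat_atTop_of_nonneg h0).mp hh
  have hexp : Tendsto (fun n => Real.exp (-∑ i ∈ range n, h i)) atTop (𝓝 0) :=
    Real.tendsto_exp_atBot.comp (tendsto_neg_atTop_atBot.comp hsum)
  refine tendsto_of_tendsto_of_tendsto_of_le_of_le tendsto_const_nhds hexp
    (fun n => prod_nonneg fun i _ => sub_nonneg.mpr (h1 i)) fun n => ?_
  calc ∏ i ∈ range n, (1 - h i)
      ≤ ∏ i ∈ range n, Real.exp (-h i) :=
        prod_le_prod (fun i _ => sub_nonneg.mpr (h1 i)) fun i _ => Real.one_sub_le_exp_neg _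
    _ = Real.exp (-∑ i ∈ range n, h i) := by rw [← sum_neg_distrib, Real.exp_sum]

lemma exists_prod_range_one_sub_mem_Ico {h : ℕ → ℝ} {x δ : ℝ} (h0 : ∀ i, 0 ≤ h i)
    (h1 : ∀ i, h i ≤ 1) (hδ : ∀ i, h i ≤ δ) (hh : ¬ Summable h) (hx : x ∈ Set.Icc 0 1)
    (hδpos : 0 < δ) :
    ∃ n, ∏ i ∈ range n, (1 - h i) ∈ Set.Ico x (x + δ) := by
  have hle_one : ∀ n, ∏ i ∈ range n, (1 - h i) ≤ 1 := fun n =>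
    prod_le_one (fun i _ => sub_nonneg.mpr (h1 i)) fun i _ => sub_le_self _ (h0 i)
  refine exists_mem_Ico_of_sub_le_succ (by simpa using hx.2) (fun n => ?_) ?_
  · rw [prod_range_succ, mul_one_sub]
    have := mul_le_of_le_one_left (h0 n) (hle_one n)
    linarith [hδ n]
  · exact ((tendsto_prod_range_one_sub_of_not_summable h0 h1 hh).eventually_lt_const
      (by linarith [hx.1])).exists

theorem stmt_16 :
    Set.Icc (0 : ℝ) 1 ⊆
      closure {x : ℝ | ∃ I : Finset ℕ, (∀ q ∈ I, Nat.Prime q ∧ Odd q) ∧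
        x = ∏ q ∈ I, ((q : ℝ) + 1) / ((q : ℝ) + 2)} := by
  intro x hx
  rw [Metric.mem_closure_iff]
  intro ε hε
  obtain ⟨k, hk⟩ := exists_nat_one_div_lt hε
  obtain ⟨p, hp_inj, hp_odd_prime, hp_ge, hsum⟩ := exists_odd_primes_ge_not_summable k
  have hsmall (i : ℕ) : (1 : ℝ) / (p i + 2) ≤ 1 / (k + 1) :=
    one_div_le_one_div_of_le (by positivity) (by have := hp_ge i; exact_mod_cast (by omega))
  obtain ⟨n, hn⟩ := exists_prod_range_one_sub_mem_Ico (fun i => by positivity)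
    (fun i => (hsmall i).trans (div_le_one_of_le₀ (by linarith) (by positivity)))
    (fun i => (hsmall i).trans hk.le) hsum hx hε
  refine ⟨_, ⟨(range n).image p, ?_, rfl⟩, ?_⟩
  · simp only [mem_image]
    rintro _ ⟨i, -, rfl⟩
    exact hp_odd_prime i
  · rw [prod_image hp_inj.injOn, _root_.dist_comm, Real.dist_eq, abs_lt]
    have hfac (i : ℕ) : ((p i : ℝ) + 1) / (p i + 2) = 1 - 1 / (p i + 2) := by field_simp; ring
    simp only [hfac]
    constructor <;> linarith [hn.1, hn.2]
end
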